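/- Let A be a d-Auslander dualizing R-variety, a ∈ A, and 0 → P_a → I^0 → ... → I^d → I^{d+1} → 0 a minimal injective coresolution of P_a. Let I^0(A) be the additive closure of injective envelopes of representable modules. Then I^k ∈ I^0(A) for all 0 ≤ k ≤ d, and I^0(A) ∩ add(I^{d+1}) = 0. -/

import Mathlib

set_option linter.unusedVariables false

/-!  Common setup: modules over a small R-linear category, finite presentation,
duality, dimensions, d-abelian categories, cluster tilting, etc.  -/

open CategoryTheory CategoryTheory.Limits Opposite

universe u

noncomputable section

namespace DP

variable (R : Type u) [CommRing R]

/-- An `R`-linear structure on the opposite category. -/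
instance oppositeLinear (A : Type u) [SmallCategory A] [Preadditive A]
    [CategoryTheory.Linear R A] : CategoryTheory.Linear R Aᵒᵖ where
  homModule X Y :=
    { smul := fun r f => (r • f.unop).op
      one_smul := fun f => Quiver.Hom.unop_inj (one_smul _ _)
      mul_smul := fun r s f => Quiver.Hom.unop_inj (mul_smul _ _ _)
      smul_zero := fun r => Quiver.Hom.unop_inj (smul_zero _)
      smul_add := fun r f g => Quiver.Hom.unop_inj (smul_add _ _ _)
      add_smul := fun r s f => Quiver.Hom.unop_inj (add_smul _ _ _)
      zero_smul := fun f => Quiver.Hom.unop_inj (zero_smul _ _) }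
  smul_comp X Y Z r f g := Quiver.Hom.unop_inj (CategoryTheory.Linear.comp_smul _ _ _ _ _ _)
  comp_smul X Y Z f r g := Quiver.Hom.unop_inj (CategoryTheory.Linear.smul_comp _ _ _ _ _ _)

variable (A : Type u) [SmallCategory A] [Preadditive A] [CategoryTheory.Linear R A]

/-- The category of (not necessarily finitely presented) right `A`-modules,
i.e. contravariant `R`-linear functors `A ⥤ Module R`. -/
abbrev Mdl : Type (u + 1) := Aᵒᵖ ⥤ ModuleCat.{u} R

/-- The representable (finitely generated projective) module `P_a = A(-,a)`. -/
abbrev Pr (a : A) : Mdl R A := (linearYoneda R A).obj a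

/-- The `A`-dual representable `P_a^* = A(a,-)`, a projective `Aᵒᵖ`-module. -/
abbrev PrS (a : A) : Mdl R Aᵒᵖ := (linearYoneda R Aᵒᵖ).obj (op a)

/-- The map `A(b,-) ⟶ A(a,-)` of `Aᵒᵖ`-modules induced by `f : a ⟶ b`. -/
abbrev dualMap {a b : A} (f : a ⟶ b) : PrS R A b ⟶ PrS R A a :=
  (linearYoneda R Aᵒᵖ).map f.op

variable {R A}

/-- Pointwise exactness of a pair of composable morphisms of `A`-modules. -/
def ExactAt {L M N : Mdl R A} (f : L ⟶ M) (g : M ⟶ N) : Prop :=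
  ∀ x : Aᵒᵖ, Function.Exact (f.app x) (g.app x)

/-- Pointwise injectivity (= being a monomorphism) of a morphism of `A`-modules. -/
def MonoPt {M N : Mdl R A} (f : M ⟶ N) : Prop :=
  ∀ x : Aᵒᵖ, Function.Injective (f.app x)

/-- Pointwise surjectivity (= being an epimorphism) of a morphism of `A`-modules. -/
def EpiPt {M N : Mdl R A} (f : M ⟶ N) : Prop :=
  ∀ x : Aᵒᵖ, Function.Surjective (f.app x)

variable (R A)

/-- A module is finitely presented if it is the cokernel of a map of representables. -/
def FP (M : Mdl R A) : Prop :=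
  ∃ (a₁ a₀ : A) (f : a₁ ⟶ a₀) (p : Pr R A a₀ ⟶ M),
    EpiPt p ∧ ExactAt ((linearYoneda R A).map f) p

/-- Finitely generated projective modules: direct summands of representables. -/
def FGProj (Q : Mdl R A) : Prop :=
  ∃ (a : A) (s : Q ⟶ Pr R A a) (r : Pr R A a ⟶ Q), s ≫ r = 𝟙 Q

/-- Injective objects of the category `mod A` of finitely presented `A`-modules. -/
def FPInjective (I : Mdl R A) : Prop :=
  FP R A I ∧ ∀ (X Y : Mdl R A), FP R A X → FP R A Y → ∀ (i : X ⟶ Y), MonoPt i →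
    ∀ g : X ⟶ I, ∃ h : Y ⟶ I, i ≫ h = g

/-- Hom-finiteness of an `R`-linear category. -/
def HomFinite : Prop := ∀ a b : A, Module.Finite R (a ⟶ b)

/-- The `E`-dual of an `A`-module, an `Aᵒᵖ`-module; for `E` the injective envelope of
`R/rad R` this is the duality `D` of Auslander–Reiten. -/
def DM (E : ModuleCat.{u} R) (M : Mdl R A) : Mdl R Aᵒᵖ :=
  M.op ⋙ (linearYoneda R (ModuleCat.{u} R)).obj E

/-- The `E`-dual of an `Aᵒᵖ`-module, viewed as an `A`-module. -/
def DM2 (E : ModuleCat.{u} R) (N : Mdl R Aᵒᵖ) : Mdl R A :=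
  (opOp A).op ⋙ N.op ⋙ (linearYoneda R (ModuleCat.{u} R)).obj E

/-- `E` is a finitely generated injective cogenerator; for `R` artinian the injective
envelope of `R/rad R` is such a module, and defines Matlis duality. -/
def GoodCogenerator (E : ModuleCat.{u} R) : Prop :=
  Injective E ∧ Module.Finite R E ∧
    ∀ (M : ModuleCat.{u} R) (x : M), x ≠ 0 → ∃ f : M ⟶ E, f x ≠ 0

/-- A dualizing `R`-variety: an essentially small Hom-finite additive idempotent complete
`R`-category such that the duality `D = Hom_R(-,E)` exchanges finitely presented `A`-modules
and finitely presented `Aᵒᵖ`-modules. -/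
structure IsDualizingVariety (E : ModuleCat.{u} R) : Prop where
  homFinite : HomFinite R A
  hasBiproducts : HasFiniteBiproducts A
  idemSplit : IsIdempotentComplete A
  cogen : GoodCogenerator R E
  dual_fp : ∀ M : Mdl R A, FP R A M → FP R Aᵒᵖ (DM R A E M)
  dual_fp_op : ∀ N : Mdl R Aᵒᵖ, FP R Aᵒᵖ N → FP R (Aᵒᵖ)ᵒᵖ (DM R Aᵒᵖ E N)

/-- `Q ⟶ ⋯ ⟶ Q 0 ⟶ M ⟶ 0` is a resolution of `M` by finitely generated projectives. -/
def IsFGProjResolution (M : Mdl R A) (Q : ℕ → Mdl R A)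
    (g : ∀ i, Q (i + 1) ⟶ Q i) (ε : Q 0 ⟶ M) : Prop :=
  (∀ i, FGProj R A (Q i)) ∧ EpiPt ε ∧ ExactAt (g 0) ε ∧ ∀ i, ExactAt (g (i + 1)) (g i)

/-- A resolution of `M` by representable modules `P_{a i}`. -/
def IsRepResolution (M : Mdl R A) (a : ℕ → A) (g : ∀ i, a (i + 1) ⟶ a i)
    (ε : Pr R A (a 0) ⟶ M) : Prop :=
  (∀ i, g (i + 1) ≫ g i = 0) ∧ EpiPt ε ∧ ExactAt ((linearYoneda R A).map (g 0)) ε ∧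
    ∀ i, ExactAt ((linearYoneda R A).map (g (i + 1))) ((linearYoneda R A).map (g i))

/-- Projective dimension at most `n`. -/
def PdimLE (M : Mdl R A) (n : ℕ) : Prop :=
  ∃ (Q : ℕ → Mdl R A) (g : ∀ i, Q (i + 1) ⟶ Q i) (ε : Q 0 ⟶ M),
    IsFGProjResolution R A M Q g ε ∧ ∀ i, n < i → IsZero (Q i)

/-- Global dimension at most `n`: every finitely presented module has `pd ≤ n`. -/
def GldimLE (n : ℕ) : Prop := ∀ M : Mdl R A, FP R A M → PdimLE R A M n

/-- `M` lies in `⊥(A_A)`, i.e. `Hom_A(M, P) = 0` for every representable `P`. -/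
def InPerpProj (M : Mdl R A) : Prop := ∀ (a : A) (f : M ⟶ Pr R A a), f = 0

section Ext

variable [HasExt.{u} (Mdl R A)]

/-- Vanishing of `Ext^k(M,X)` for all `1 ≤ k ≤ d`. -/
def ExtVanishLE (M X : Mdl R A) (d : ℕ) : Prop :=
  ∀ k, 1 ≤ k → k ≤ d → Subsingleton (Abelian.Ext M X k)

/-- `M` lies in `⊥_d (A_A)`: `Ext^k(M,P) = 0` for `1 ≤ k ≤ d` and all representables. -/
def InPerpdProj (d : ℕ) (M : Mdl R A) : Prop := ∀ a : A, ExtVanishLE R A M (Pr R A a) d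

end Ext

/-- Dominant dimension at least `d + 1`: each representable has an injective coresolution
whose first `d + 1` terms are projective. -/
def DomdimGE (d : ℕ) : Prop := ∀ a : A,
  ∃ (I : ℕ → Mdl R A) (η : Pr R A a ⟶ I 0) (f : ∀ i, I i ⟶ I (i + 1)),
    MonoPt η ∧ ExactAt η (f 0) ∧ (∀ i, ExactAt (f i) (f (i + 1))) ∧
    (∀ i, FPInjective R A (I i)) ∧ ∀ i ≤ d, FGProj R A (I i)

/-- A `d`-Auslander pair of dimensions: `gldim A ≤ d + 1 ≤ domdim A`. -/
def IsDAuslander (d : ℕ) : Prop := GldimLE R A (d + 1) ∧ DomdimGE R A d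

/-- An essential monomorphism (with test objects in `mod A`). -/
def IsEssentialMono {M I : Mdl R A} (η : M ⟶ I) : Prop :=
  MonoPt η ∧ ∀ Y : Mdl R A, FP R A Y → ∀ g : I ⟶ Y, MonoPt (η ≫ g) → MonoPt g

/-- An injective envelope in `mod A`. -/
def IsInjEnvelope {M I : Mdl R A} (η : M ⟶ I) : Prop :=
  FPInjective R A I ∧ IsEssentialMono R A η

/-- A projective cover in `mod A`. -/
def IsProjCover {Q N : Mdl R A} (p : Q ⟶ N) : Prop :=
  FGProj R A Q ∧ EpiPt p ∧ ∀ Y : Mdl R A, FP R A Y → ∀ g : Y ⟶ Q, EpiPt (g ≫ p) → EpiPt g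

/-- A minimal injective coresolution `0 ⟶ M ⟶ I 0 ⟶ I 1 ⟶ ⋯`. -/
def MinInjCores (M : Mdl R A) (I : ℕ → Mdl R A) (η : M ⟶ I 0)
    (f : ∀ i, I i ⟶ I (i + 1)) : Prop :=
  MonoPt η ∧ ExactAt η (f 0) ∧ (∀ i, ExactAt (f i) (f (i + 1))) ∧
    (∀ i, FPInjective R A (I i)) ∧ IsEssentialMono R A η ∧
    ∀ i, IsEssentialMono R A (kernel.ι (f (i + 1)))

/-- `W` is a (first, minimal) syzygy of `M`. -/
def IsSyzygyOf (W M : Mdl R A) : Prop :=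
  ∃ (Q : Mdl R A) (p : Q ⟶ M) (ι : W ⟶ Q), IsProjCover R A p ∧ MonoPt ι ∧ ExactAt ι p

/-- `W` is an `n`-th (minimal) syzygy of `M`. -/
def IsNthSyzygyOf (W M : Mdl R A) (n : ℕ) : Prop :=
  ∃ Y : ℕ → Mdl R A, Nonempty (Y 0 ≅ M) ∧ Nonempty (Y n ≅ W) ∧
    ∀ i < n, IsSyzygyOf R A (Y (i + 1)) (Y i)

/-- `W` is a (first, minimal) cosyzygy of `M`. -/
def IsCosyzygyOf (W M : Mdl R A) : Prop :=
  ∃ (I : Mdl R A) (η : M ⟶ I) (π : I ⟶ W), IsInjEnvelope R A η ∧ EpiPt π ∧ ExactAt η π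

/-- `W` is an `n`-th (minimal) cosyzygy of `M`. -/
def IsNthCosyzygyOf (W M : Mdl R A) (n : ℕ) : Prop :=
  ∃ Y : ℕ → Mdl R A, Nonempty (Y 0 ≅ M) ∧ Nonempty (Y n ≅ W) ∧
    ∀ i < n, IsCosyzygyOf R A (Y (i + 1)) (Y i)

/-- `M` is a first syzygy, i.e. the kernel of a projective cover in `mod A`. -/
def InOmega (M : Mdl R A) : Prop :=
  ∃ (N Q : Mdl R A) (p : Q ⟶ N) (ι : M ⟶ Q),
    FP R A N ∧ IsProjCover R A p ∧ MonoPt ι ∧ ExactAt ι p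

/-- Right approximations with respect to a subcategory (given by a predicate). -/
def ContravariantlyFinite (P : Mdl R A → Prop) : Prop :=
  ∀ M : Mdl R A, FP R A M → ∃ (B : Mdl R A) (f : B ⟶ M), P B ∧
    ∀ B' : Mdl R A, P B' → ∀ g : B' ⟶ M, ∃ h : B' ⟶ B, h ≫ f = g

/-- Left approximations with respect to a subcategory (given by a predicate). -/
def CovariantlyFinite (P : Mdl R A → Prop) : Prop :=
  ∀ M : Mdl R A, FP R A M → ∃ (B : Mdl R A) (f : M ⟶ B), P B ∧
    ∀ B' : Mdl R A, P B' → ∀ g : M ⟶ B', ∃ h : B ⟶ B', f ≫ h = g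

/-- Functorially finite subcategories of `mod A`. -/
def FunctoriallyFinite (P : Mdl R A → Prop) : Prop :=
  ContravariantlyFinite R A P ∧ CovariantlyFinite R A P

section DCT

variable [HasExt.{u} (Mdl R A)]

/-- `X ∈ ⊥_{d-1} P`. -/
def InLeftPerp (P : Mdl R A → Prop) (d : ℕ) (X : Mdl R A) : Prop :=
  FP R A X ∧ ∀ M, P M → ∀ k, 1 ≤ k → k ≤ d - 1 → Subsingleton (Abelian.Ext X M k)

/-- `X ∈ P^{⊥_{d-1}}`. -/
def InRightPerp (P : Mdl R A → Prop) (d : ℕ) (X : Mdl R A) : Prop :=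
  FP R A X ∧ ∀ M, P M → ∀ k, 1 ≤ k → k ≤ d - 1 → Subsingleton (Abelian.Ext M X k)

/-- `P` is a `d`-cluster-tilting subcategory of `mod A`. -/
def IsDCT (P : Mdl R A → Prop) (d : ℕ) : Prop :=
  (∀ M, P M → FP R A M) ∧ FunctoriallyFinite R A P ∧
    (∀ X, P X ↔ InLeftPerp R A P d X) ∧ (∀ X, P X ↔ InRightPerp R A P d X)

end DCT

/-- `W` is the homology of `f : L ⟶ M`, `g : M ⟶ N` at `M` (in a module category). -/
def IsModHomologyOf {L M N : ModuleCat.{u} R} (f : L ⟶ M) (g : M ⟶ N)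
    (W : ModuleCat.{u} R) : Prop :=
  ∃ (w : f ≫ g = 0) (π : kernel g ⟶ W),
    Function.Surjective π ∧ Function.Exact (kernel.lift g f w) π

/-- Precomposition `Hom(Y,W) ⟶ Hom(X,W)` as a morphism of `R`-modules. -/
def preComp {X Y : Mdl R A} (f : X ⟶ Y) (W : Mdl R A) :
    ModuleCat.of R (Y ⟶ W) ⟶ ModuleCat.of R (X ⟶ W) :=
  ModuleCat.ofHom (CategoryTheory.Linear.leftComp R W f)

/-- Simple objects of `mod A`. -/
def IsSimpleMod (S : Mdl R A) : Prop :=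
  FP R A S ∧ ¬ IsZero S ∧
    ∀ (N : Mdl R A) (ι : N ⟶ S), MonoPt ι → IsZero N ∨ EpiPt ι

/-- Chains `⋯ ⟶ X 2 ⟶ X 1 ⟶ X 0` in a category. -/
structure NChain (A : Type u) [SmallCategory A] where
  X : ℕ → A
  f : ∀ i, X (i + 1) ⟶ X i

variable {A}

/-- The sequence `0 ⟶ X (d+1) ⟶ ⋯ ⟶ X 0` is left `d`-exact: it becomes exact
under every `A(x,-)`. -/
def NChain.LeftDExact (c : NChain A) (d : ℕ) : Prop :=
  ∀ x : A, (Function.Injective fun g : x ⟶ c.X (d + 1) => g ≫ c.f d) ∧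
    ∀ i < d, Function.Exact (fun g : x ⟶ c.X (i + 2) => g ≫ c.f (i + 1))
      (fun g : x ⟶ c.X (i + 1) => g ≫ c.f i)

/-- The sequence `X (d+1) ⟶ ⋯ ⟶ X 0 ⟶ 0` is right `d`-exact: it becomes exact
under every `A(-,x)`. -/
def NChain.RightDExact (c : NChain A) (d : ℕ) : Prop :=
  ∀ x : A, (Function.Injective fun g : c.X 0 ⟶ x => c.f 0 ≫ g) ∧
    ∀ i < d, Function.Exact (fun g : c.X i ⟶ x => c.f i ≫ g)
      (fun g : c.X (i + 1) ⟶ x => c.f (i + 1) ≫ g)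

/-- A `d`-exact sequence `0 ⟶ X (d+1) ⟶ ⋯ ⟶ X 0 ⟶ 0`. -/
def NChain.DExact (c : NChain A) (d : ℕ) : Prop :=
  c.LeftDExact d ∧ c.RightDExact d

variable (A)

/-- A `d`-abelian category (Jasso): idempotent complete additive category with
`d`-kernels, `d`-cokernels, and `d`-exact sequences for epis and monos. -/
structure IsDAbelian (d : ℕ) : Prop where
  idemSplit : IsIdempotentComplete A
  a1 : ∀ ⦃a₁ a₀ : A⦄ (f : a₁ ⟶ a₀), ∃ (c : NChain A) (e₁ : c.X 1 ≅ a₁) (e₀ : c.X 0 ≅ a₀),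
    c.f 0 = e₁.hom ≫ f ≫ e₀.inv ∧ c.LeftDExact d
  a1op : ∀ ⦃a₁ a₀ : A⦄ (f : a₁ ⟶ a₀), ∃ (c : NChain A) (e₁ : c.X (d + 1) ≅ a₁)
    (e₀ : c.X d ≅ a₀), c.f d = e₁.hom ≫ f ≫ e₀.inv ∧ c.RightDExact d
  a2 : ∀ ⦃a₁ a₀ : A⦄ (f : a₁ ⟶ a₀), Epi f → ∃ (c : NChain A) (e₁ : c.X 1 ≅ a₁)
    (e₀ : c.X 0 ≅ a₀), c.f 0 = e₁.hom ≫ f ≫ e₀.inv ∧ c.DExact d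
  a2op : ∀ ⦃a₁ a₀ : A⦄ (f : a₁ ⟶ a₀), Mono f → ∃ (c : NChain A) (e₁ : c.X (d + 1) ≅ a₁)
    (e₀ : c.X d ≅ a₀), c.f d = e₁.hom ≫ f ≫ e₀.inv ∧ c.DExact d

/-- The `A`-dual module `M^* = Hom_A(M,-)|_A`, an `Aᵒᵖ`-module. -/
def starMod (R : Type u) [CommRing R] (A : Type u) [SmallCategory A] [Preadditive A]
    [CategoryTheory.Linear R A] (M : Mdl R A) : Mdl R Aᵒᵖ :=
  unopUnop A ⋙ linearYoneda R A ⋙ (linearCoyoneda R (Mdl R A)).obj (Opposite.op M)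

/-- The double `A`-dual module `M^{**}`, an `A`-module. -/
def doubleStar (R : Type u) [CommRing R] (A : Type u) [SmallCategory A] [Preadditive A]
    [CategoryTheory.Linear R A] (M : Mdl R A) : Mdl R A :=
  linearYoneda R Aᵒᵖ ⋙ (linearCoyoneda R (Mdl R Aᵒᵖ)).obj (Opposite.op (starMod R A M))


instance mdlHasFiniteBiproducts (A : Type u) [SmallCategory A] [Preadditive A]
    [CategoryTheory.Linear R A] : HasFiniteBiproducts (Mdl R A) :=
  Limits.HasFiniteBiproducts.of_hasFiniteCoproducts

end DP

namespace DP

variable (R : Type u) [CommRing R] [IsArtinianRing R]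


variable (A : Type u) [SmallCategory A] [Preadditive A] [CategoryTheory.Linear R A]

/-- Membership in `I^0(A)`: the additive closure of the injective envelopes of the
representable modules. -/
def InI0 (J : Mdl R A) : Prop :=
  ∃ (n : ℕ) (b : Fin n → A) (Jv : Fin n → Mdl R A) (η : ∀ i, Pr R A (b i) ⟶ Jv i),
    (∀ i, IsInjEnvelope R A (η i)) ∧
    ∃ (s : J ⟶ ⨁ Jv) (r : (⨁ Jv) ⟶ J), s ≫ r = 𝟙 J

/-- Membership in `add X`. -/
def InAddOf (X J : Mdl R A) : Prop :=
  ∃ (n : ℕ) (s : J ⟶ ⨁ fun _ : Fin n => X) (r : (⨁ fun _ : Fin n => X) ⟶ J), s ≫ r = 𝟙 J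

/-! The minimal injective coresolution `I` of `P_a` is, degreewise, a direct summand of every
injective coresolution `I'` of `P_a`: chain maps `I → I' → I` over the identity compose to an
endomorphism of `I` which is injective in each degree (by essentiality of `P_a → I 0` and of the
cosyzygies `ker (f (k + 1)) ⊆ I (k + 1)`), hence bijective, all values being of finite length.
Taking for `I'` the coresolution given by `domdim A ≥ d + 1`, the terms `I 0, …, I d` are
projective; as idempotents split in `A`, each is some `P_b`, its own injective envelope.

In the same way the injective envelope of any `P_b` is a summand of a projective, so every
`J ∈ I^0(A)` is projective. If `J` is a summand of `(I (d + 1))ⁿ`, its components lift along the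
epimorphism `f d`. Since `ker (f d)` is essential in `I d`, every nonzero element of `J` can be
moved, staying nonzero, into the kernel of all components at once, which is impossible for a
split monomorphism `J ⟶ (I (d + 1))ⁿ`. -/

lemma IsArtinian.mem_of_apply_mem {R M : Type*} [Ring R] [AddCommGroup M] [Module R M]
    [IsArtinian R M] {f : M →ₗ[R] M} (hf : Function.Injective f) {T : Submodule R M}
    (hT : ∀ x ∈ T, f x ∈ T) {v : M} (hv : f v ∈ T) : v ∈ T := by
  obtain ⟨t, ht⟩ := IsArtinian.surjective_of_injective_endomorphism (f.restrict hT)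
    (fun s t hst => Subtype.ext (hf (congrArg Subtype.val hst))) ⟨f v, hv⟩
  exact hf (congrArg Subtype.val ht) ▸ t.2

section

variable {R : Type u} [CommRing R] {A : Type u} [SmallCategory A]

lemma monoPt_iff_mono {M N : Mdl R A} (f : M ⟶ N) : MonoPt f ↔ Mono f := by
  simp only [MonoPt, NatTrans.mono_iff_mono_app, ModuleCat.mono_iff_injective]

lemma isIso_of_bijective_app {M N : Mdl R A} (f : M ⟶ N)
    (hf : ∀ y, Function.Bijective (f.app y)) : IsIso f := by
  have := fun y => (ConcreteCategory.isIso_iff_bijective (f.app y)).2 (hf y)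
  exact NatIso.isIso_of_isIso_app f

lemma ExactAt.comp_eq_zero {L M N : Mdl R A} {f : L ⟶ M} {g : M ⟶ N} (h : ExactAt f g) :
    f ≫ g = 0 := by
  ext x u
  exact (h x).apply_apply_eq_zero u

lemma ExactAt.epiPt_comp {K L M N : Mdl R A} {p : K ⟶ L} {f : L ⟶ M} {g : M ⟶ N}
    (hp : EpiPt p) (h : ExactAt f g) : ExactAt (p ≫ f) g := by
  intro y u
  refine (h y u).trans ⟨fun ⟨v, hv⟩ => ?_, fun ⟨w, hw⟩ => ⟨_, hw⟩⟩
  obtain ⟨w, rfl⟩ := hp y v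
  exact ⟨w, hv⟩

lemma ExactAt.epiPt_of_isZero {L M N : Mdl R A} {f : L ⟶ M} {g : M ⟶ N} (h : ExactAt f g)
    (hN : IsZero N) : EpiPt f := by
  intro y u
  refine (h y u).1 ?_
  rw [hN.eq_of_tgt g 0]
  rfl

variable [Preadditive A] [CategoryTheory.Linear R A]

lemma pr_hom_app {c : A} {M : Mdl R A} (θ : Pr R A c ⟶ M) {y : Aᵒᵖ} (g : y.unop ⟶ c) :
    θ.app y g = M.map g.op (θ.app (op c) (𝟙 c)) :=
  (congrArg (θ.app y) (Category.comp_id g).symm).trans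
    (NatTrans.naturality_apply θ (X := op c) (Y := y) g.op (𝟙 c : c ⟶ c))

lemma pr_hom_ext {c : A} {M : Mdl R A} {θ θ' : Pr R A c ⟶ M}
    (h : θ.app (op c) (𝟙 c) = θ'.app (op c) (𝟙 c)) : θ = θ' := by
  ext y g
  exact (pr_hom_app θ (y := y) g).trans (h ▸ (pr_hom_app θ' (y := y) g).symm)

lemma fp_pr (c : A) : FP R A (Pr R A c) := by
  refine ⟨c, c, 0, 𝟙 _, fun y => Function.surjective_id, fun y g => ?_⟩
  simp only [NatTrans.id_app]
  constructor
  · rintro rfl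
    exact ⟨0, by simp⟩
  · rintro ⟨w, rfl⟩
    simp

lemma FP.exists_epiPt {M : Mdl R A} (hM : FP R A M) : ∃ (c : A) (p : Pr R A c ⟶ M), EpiPt p :=
  let ⟨_, c, _, p, hp, _⟩ := hM
  ⟨c, p, hp⟩

lemma FP.exists_pr_hom {M : Mdl R A} (hM : FP R A M) {c : A} (u : M.obj (op c)) :
    ∃ φ : Pr R A c ⟶ M, φ.app (op c) (𝟙 c) = u := by
  obtain ⟨_, p, hp⟩ := hM.exists_epiPt
  obtain ⟨w, rfl⟩ := hp (op c) u
  exact ⟨(linearYoneda R A).map w ≫ p, congrArg (p.app (op c)) (Category.id_comp w)⟩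

lemma FP.exists_lift_pr {M N : Mdl R A} (hM : FP R A M) {g : M ⟶ N} (hg : EpiPt g) {c : A}
    (h : Pr R A c ⟶ N) : ∃ l : Pr R A c ⟶ M, l ≫ g = h := by
  obtain ⟨w, hw⟩ := hg (op c) (h.app (op c) (𝟙 c))
  obtain ⟨l, hl⟩ := hM.exists_pr_hom w
  refine ⟨l, pr_hom_ext ?_⟩
  change g.app _ (l.app _ (𝟙 c)) = _
  rw [hl, hw]

lemma FGProj.of_retract {M N : Mdl R A} (hN : FGProj R A N) (s : M ⟶ N) (r : N ⟶ M)
    (hsr : s ≫ r = 𝟙 M) : FGProj R A M := by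
  obtain ⟨c, s', r', hsr'⟩ := hN
  exact ⟨c, s ≫ s', r' ≫ r, by simp [reassoc_of% hsr', hsr]⟩

lemma FGProj.exists_lift {Q M N : Mdl R A} (hQ : FGProj R A Q) (hM : FP R A M) {g : M ⟶ N}
    (hg : EpiPt g) (h : Q ⟶ N) : ∃ l : Q ⟶ M, l ≫ g = h := by
  obtain ⟨c, s, r, hsr⟩ := hQ
  obtain ⟨l, hl⟩ := hM.exists_lift_pr hg (r ≫ h)
  exact ⟨s ≫ l, by simp [hl, reassoc_of% hsr]⟩

instance linearYoneda_additive : (linearYoneda R A).Additive where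
  map_add {_ _ f g} := by
    ext y h
    exact Preadditive.comp_add _ _ _ _ _ _

lemma fgProj_biproduct [HasFiniteBiproducts A] {n : ℕ} {Q : Fin n → Mdl R A}
    (hQ : ∀ i, FGProj R A (Q i)) : FGProj R A (⨁ Q) := by
  choose c s r hsr using hQ
  refine ⟨⨁ c, biproduct.map (g := (linearYoneda R A).obj ∘ c) s ≫
    ((linearYoneda R A).mapBiproduct c).inv,
    ((linearYoneda R A).mapBiproduct c).hom ≫ biproduct.map (f := (linearYoneda R A).obj ∘ c) r,
    ?_⟩
  simp only [Category.assoc, Iso.inv_hom_id_assoc]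
  exact biproduct.hom_ext _ _ fun j => by simp [hsr]

lemma FGProj.exists_iso_pr [IsIdempotentComplete A] {Q : Mdl R A} (hQ : FGProj R A Q) :
    ∃ b : A, Nonempty (Pr R A b ≅ Q) := by
  obtain ⟨c, s, r, hsr⟩ := hQ
  have hmap : (linearYoneda R A).map ((linearYoneda R A).preimage (r ≫ s)) = r ≫ s :=
    (linearYoneda R A).map_preimage _
  set e := (linearYoneda R A).preimage (r ≫ s)
  have he : e ≫ e = e := (linearYoneda R A).map_injective (by simp [hmap, reassoc_of% hsr])
  obtain ⟨b, i, p, hip, hpi⟩ := IsIdempotentComplete.idempotents_split c e he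
  refine ⟨b, ⟨⟨(linearYoneda R A).map i ≫ r, s ≫ (linearYoneda R A).map p, ?_, ?_⟩⟩⟩
  · rw [Category.assoc, reassoc_of% hmap.symm]
    simp [← Functor.map_comp, ← hpi, hip]
  · rw [Category.assoc, ← Functor.map_comp_assoc, hpi, hmap]
    simp [hsr]

lemma FP.finite_obj (hFin : HomFinite R A) {M : Mdl R A} (hM : FP R A M) (y : Aᵒᵖ) :
    Module.Finite R (M.obj y) := by
  obtain ⟨c, p, hp⟩ := hM.exists_epiPt
  have : Module.Finite R ((Pr R A c).obj y) := hFin y.unop c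
  exact Module.Finite.of_surjective (p.app y).hom (hp y)

lemma FP.bijective_of_monoPt [IsArtinianRing R] (hFin : HomFinite R A) {M : Mdl R A}
    (hM : FP R A M) {θ : M ⟶ M} (hθ : MonoPt θ) (y : Aᵒᵖ) : Function.Bijective (θ.app y) := by
  have := hM.finite_obj hFin y
  exact IsArtinian.bijective_of_injective_endomorphism (θ.app y).hom (hθ y)

def quotRange {M : Mdl R A} {c : A} (φ : Pr R A c ⟶ M) : Mdl R A where
  obj y := ModuleCat.of R (M.obj y ⧸ LinearMap.range (φ.app y).hom)
  map {y z} ψ := ModuleCat.ofHom (Submodule.mapQ _ _ (M.map ψ).hom (by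
    rintro _ ⟨g, rfl⟩
    exact ⟨(Pr R A c).map ψ g, NatTrans.naturality_apply φ ψ g⟩))
  map_id y := by
    ext u
    simp
  map_comp ψ χ := by
    ext u
    simp

namespace quotRange

variable {M : Mdl R A} {c : A} (φ : Pr R A c ⟶ M)

def π : M ⟶ quotRange φ where
  app y := ModuleCat.ofHom (LinearMap.range (φ.app y).hom).mkQ

lemma π_app_surjective (y : Aᵒᵖ) : Function.Surjective ((π φ).app y) :=
  Submodule.Quotient.mk_surjective _

lemma π_app_eq_zero_iff {y : Aᵒᵖ} (u : M.obj y) :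
    (π φ).app y u = 0 ↔ ∃ g : y.unop ⟶ c, φ.app y g = u :=
  (Submodule.Quotient.mk_eq_zero _).trans LinearMap.mem_range

def desc {N : Mdl R A} (G : M ⟶ N) (hG : φ ≫ G = 0) : quotRange φ ⟶ N where
  app y := ModuleCat.ofHom (Submodule.liftQ _ (G.app y).hom (by
    rintro _ ⟨g, rfl⟩
    simpa using congr(($hG).app y g)))
  naturality y z ψ := by
    apply ModuleCat.hom_ext
    apply Submodule.linearMap_qext
    ext u
    exact NatTrans.naturality_apply G ψ u

lemma π_desc {N : Mdl R A} (G : M ⟶ N) (hG : φ ≫ G = 0) : π φ ≫ desc φ G hG = G := rfl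

end quotRange

lemma FP.quotRange [HasBinaryBiproducts A] {M : Mdl R A} (hM : FP R A M) {c : A}
    (φ : Pr R A c ⟶ M) : FP R A (quotRange φ) := by
  -- `φ` factors as `P_c → P_{a₀} → M` through `w`, so `P_{a₁ ⊞ c} → P_{a₀}` presents the quotient.
  obtain ⟨a₁, a₀, fM, p, hp, hex⟩ := hM
  obtain ⟨w, hw⟩ := hp (op c) (φ.app (op c) (𝟙 c))
  change c ⟶ a₀ at w
  have hφ : ∀ {y : Aᵒᵖ} (g : y.unop ⟶ c), φ.app y g = p.app y (g ≫ w) := fun g =>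
    congr(($(pr_hom_ext (θ := (linearYoneda R A).map w ≫ p)
      ((congrArg (p.app (op c)) (Category.id_comp w)).trans hw))).app _ g).symm
  refine ⟨a₁ ⊞ c, a₀, biprod.desc fM w, p ≫ quotRange.π φ,
    fun y => (quotRange.π_app_surjective φ y).comp (hp y), fun y (h : y.unop ⟶ a₀) => ?_⟩
  change (quotRange.π φ).app y (p.app y h) = 0 ↔ ∃ ζ : y.unop ⟶ a₁ ⊞ c, ζ ≫ biprod.desc fM w = h
  rw [quotRange.π_app_eq_zero_iff]
  constructor
  · rintro ⟨g, hg⟩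
    have hsub : p.app y (h - g ≫ w) = p.app y h - p.app y (g ≫ w) :=
      map_sub (p.app y).hom h (g ≫ w)
    obtain ⟨ξ, hξ⟩ := (hex y (h - g ≫ w)).1 (by rw [hsub, ← hφ, hg, sub_self])
    change y.unop ⟶ a₁ at ξ
    change ξ ≫ fM = h - g ≫ w at hξ
    exact ⟨biprod.lift ξ g, by rw [biprod.lift_desc, hξ, sub_add_cancel]⟩
  · rintro ⟨ζ, rfl⟩
    refine ⟨ζ ≫ biprod.snd, ?_⟩
    have hsplit : ζ ≫ biprod.desc fM w = (ζ ≫ biprod.fst) ≫ fM + (ζ ≫ biprod.snd) ≫ w := by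
      rw [biprod.desc_eq, Preadditive.comp_add, Category.assoc, Category.assoc]
    have hadd : p.app y ((ζ ≫ biprod.fst) ≫ fM + (ζ ≫ biprod.snd) ≫ w) =
        p.app y ((ζ ≫ biprod.fst) ≫ fM) + p.app y ((ζ ≫ biprod.snd) ≫ w) :=
      map_add (p.app y).hom _ _
    have hzero : p.app y ((ζ ≫ biprod.fst) ≫ fM) = 0 := (hex y).apply_apply_eq_zero _
    rw [hsplit, hadd, hzero, zero_add, hφ]

lemma FPInjective.exists_comp_eq [HasBinaryBiproducts A] {M N J : Mdl R A}
    (hJ : FPInjective R A J) (hM : FP R A M) (hN : FP R A N) {c : A} {κ : Pr R A c ⟶ M}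
    {F : M ⟶ N} (hκ : ExactAt κ F) {g : M ⟶ J}
    (hg : ∀ y u, F.app y u = 0 → g.app y u = 0) : ∃ h : N ⟶ J, F ≫ h = g := by
  have hκg : κ ≫ g = 0 := by
    ext y v
    exact hg y _ ((hκ y _).2 ⟨v, rfl⟩)
  have hmono : MonoPt (quotRange.desc κ F hκ.comp_eq_zero) := by
    intro y
    rw [injective_iff_map_eq_zero]
    intro u hu
    obtain ⟨v, rfl⟩ := quotRange.π_app_surjective κ y u
    exact (quotRange.π_app_eq_zero_iff κ v).2 ((hκ y v).1 hu)
  obtain ⟨h, hh⟩ := hJ.2 _ N (hM.quotRange κ) hN _ hmono (quotRange.desc κ g hκg)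
  exact ⟨h, by rw [← quotRange.π_desc κ F hκ.comp_eq_zero, Category.assoc, hh, quotRange.π_desc]⟩

section Coresolution

variable {M : Mdl R A} {I I' : ℕ → Mdl R A} {η : M ⟶ I 0} {η' : M ⟶ I' 0}
  {f : ∀ i, I i ⟶ I (i + 1)} {f' : ∀ i, I' i ⟶ I' (i + 1)}

structure IsInjCoresolution (η : M ⟶ I 0) (f : ∀ i, I i ⟶ I (i + 1)) : Prop where
  mono : MonoPt η
  exact_zero : ExactAt η (f 0)
  exact : ∀ i, ExactAt (f i) (f (i + 1))
  injective : ∀ i, FPInjective R A (I i)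

lemma MinInjCores.isInjCoresolution (h : MinInjCores R A M I η f) : IsInjCoresolution η f :=
  ⟨h.1, h.2.1, h.2.2.1, h.2.2.2.1⟩

lemma IsInjCoresolution.exists_exactAt (hM : FP R A M) (hI : IsInjCoresolution η f) :
    ∀ i, ∃ (c : A) (κ : Pr R A c ⟶ I i), ExactAt κ (f i)
  | 0 =>
    let ⟨c, p, hp⟩ := hM.exists_epiPt
    ⟨c, p ≫ η, hI.exact_zero.epiPt_comp hp⟩
  | i + 1 =>
    let ⟨c, p, hp⟩ := (hI.injective i).1.exists_epiPt
    ⟨c, p ≫ f i, (hI.exact i).epiPt_comp hp⟩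

lemma IsInjCoresolution.exists_chainMap [HasBinaryBiproducts A] (hM : FP R A M)
    (hI : IsInjCoresolution η f) (hI' : IsInjCoresolution η' f') :
    ∃ φ : ∀ i, I i ⟶ I' i, η ≫ φ 0 = η' ∧ ∀ i, f i ≫ φ (i + 1) = φ i ≫ f' i := by
  choose c κ hκ using hI.exists_exactAt hM
  -- The recursion carries the invariant `φ i (ker (f i)) ⊆ ker (f' i)`, which is what lets
  -- `φ i ≫ f' i` extend along `f i`.
  let MapsKer (i : ℕ) (φ : I i ⟶ I' i) : Prop :=
    ∀ y u, (f i).app y u = 0 → (f' i).app y (φ.app y u) = 0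
  obtain ⟨φ₀, hφ₀⟩ := (hI'.injective 0).2 M (I 0) hM (hI.injective 0).1 η hI.mono η'
  have hφ₀ker : MapsKer 0 φ₀ := by
    intro y u hu
    obtain ⟨v, rfl⟩ := (hI.exact_zero y u).1 hu
    rw [show φ₀.app y (η.app y v) = η'.app y v from congr(($hφ₀).app y v)]
    exact (hI'.exact_zero y).apply_apply_eq_zero v
  have step : ∀ i (φ : Subtype (MapsKer i)), ∃ φ' : Subtype (MapsKer (i + 1)),
      f i ≫ φ'.1 = φ.1 ≫ f' i := by
    rintro i ⟨φ, hφ⟩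
    obtain ⟨φ', hφ'⟩ := (hI'.injective (i + 1)).exists_comp_eq (hI.injective i).1
      (hI.injective (i + 1)).1 (hκ i) (g := φ ≫ f' i) hφ
    refine ⟨⟨φ', fun y u hu => ?_⟩, hφ'⟩
    obtain ⟨v, rfl⟩ := (hI.exact i y u).1 hu
    rw [show φ'.app y ((f i).app y v) = (f' i).app y (φ.app y v) from congr(($hφ').app y v)]
    exact (hI'.exact i y).apply_apply_eq_zero _
  choose next hnext using step
  let φ (i : ℕ) : Subtype (MapsKer i) := Nat.rec ⟨φ₀, hφ₀ker⟩ next i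
  exact ⟨fun i => (φ i).1, hφ₀, fun i => hnext i (φ i)⟩

lemma MinInjCores.bijective_of_comp_eq [IsArtinianRing R] (hFin : HomFinite R A)
    (hmin : MinInjCores R A M I η f) {θ : ∀ i, I i ⟶ I i} (hθ₀ : η ≫ θ 0 = η)
    (hθ : ∀ i, f i ≫ θ (i + 1) = θ i ≫ f i) (i : ℕ) (y : Aᵒᵖ) :
    Function.Bijective ((θ i).app y) := by
  obtain ⟨hη, -, hex, hinj, hess₀, hess⟩ := hmin
  induction i generalizing y with
  | zero => exact (hinj 0).1.bijective_of_monoPt hFin (hess₀.2 _ (hinj 0).1 _ (by rwa [hθ₀])) y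
  | succ i ih =>
    have hcomm : ∀ y v, (θ (i + 1)).app y ((f i).app y v) = (f i).app y ((θ i).app y v) :=
      fun y v => congr(($(hθ i)).app y v)
    refine (hinj (i + 1)).1.bijective_of_monoPt hFin
      ((hess i).2 _ (hinj (i + 1)).1 _ fun y => ?_) y
    rw [injective_iff_map_eq_zero]
    intro w hw
    have hι : (f (i + 1)).app y ((kernel.ι (f (i + 1))).app y w) = 0 :=
      congr(($(kernel.condition (f (i + 1)))).app y w)
    obtain ⟨v, hv⟩ := (hex i y _).1 hι
    have := (hinj i).1.finite_obj hFin y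
    -- `θ i` is injective and preserves `ker (f i)`, hence maps it onto itself.
    have hv₀ : (f i).app y v = 0 := by
      refine IsArtinian.mem_of_apply_mem (f := ((θ i).app y).hom) (ih y).1
        (T := LinearMap.ker ((f i).app y).hom) (fun x hx => ?_) ?_
      · change (f i).app y ((θ i).app y x) = 0
        rw [← hcomm, show (f i).app y x = 0 from hx, map_zero]
      · change (f i).app y ((θ i).app y v) = 0
        rw [← hcomm, hv]
        exact hw
    apply (hess i).1 y
    rw [map_zero, ← hv, hv₀]

lemma MinInjCores.exists_retract [IsArtinianRing R] [HasBinaryBiproducts A]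
    (hFin : HomFinite R A) (hM : FP R A M) (hmin : MinInjCores R A M I η f)
    (hI' : IsInjCoresolution η' f') (i : ℕ) :
    ∃ (s : I i ⟶ I' i) (r : I' i ⟶ I i), s ≫ r = 𝟙 (I i) := by
  obtain ⟨φ, hφ₀, hφ⟩ := hmin.isInjCoresolution.exists_chainMap hM hI'
  obtain ⟨ψ, hψ₀, hψ⟩ := hI'.exists_chainMap hM hmin.isInjCoresolution
  have hθ := hmin.bijective_of_comp_eq hFin (θ := fun i => φ i ≫ ψ i)
    (by rw [reassoc_of% hφ₀, hψ₀])
    (fun i => by rw [reassoc_of% hφ i, hψ i, Category.assoc])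
  have : IsIso (φ i ≫ ψ i) := isIso_of_bijective_app _ (hθ i)
  exact ⟨φ i, ψ i ≫ inv (φ i ≫ ψ i), by rw [← Category.assoc, IsIso.hom_inv_id]⟩

end Coresolution

lemma MinInjCores.fgProj_of_domdimGE [IsArtinianRing R] [HasBinaryBiproducts A]
    (hFin : HomFinite R A) {d : ℕ} (hdom : DomdimGE R A d) {a : A} {I : ℕ → Mdl R A}
    {η : Pr R A a ⟶ I 0} {f : ∀ i, I i ⟶ I (i + 1)} (hmin : MinInjCores R A (Pr R A a) I η f)
    {k : ℕ} (hk : k ≤ d) : FGProj R A (I k) := by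
  obtain ⟨I', η', f', hη', hex₀', hex', hinj', hproj'⟩ := hdom a
  obtain ⟨s, r, hsr⟩ := hmin.exists_retract hFin (fp_pr a) ⟨hη', hex₀', hex', hinj'⟩ k
  exact (hproj' k hk).of_retract s r hsr

lemma isEssentialMono_of_isIso {M N : Mdl R A} (e : M ⟶ N) [IsIso e] : IsEssentialMono R A e := by
  refine ⟨(monoPt_iff_mono e).2 inferInstance, fun Y _ g hg => ?_⟩
  rw [monoPt_iff_mono] at hg ⊢
  rw [← IsIso.inv_hom_id_assoc e g]
  exact mono_comp _ _

lemma inI0_of_fgProj [IsIdempotentComplete A] {Q : Mdl R A} (hQ : FGProj R A Q)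
    (hinj : FPInjective R A Q) : InI0 R A Q := by
  obtain ⟨b, ⟨e⟩⟩ := hQ.exists_iso_pr
  exact ⟨1, fun _ => b, fun _ => Q, fun _ => e.hom, fun _ => ⟨hinj, isEssentialMono_of_isIso _⟩,
    biproduct.ι (fun _ : Fin 1 => Q) 0, biproduct.π _ 0, biproduct.ι_π_self _ 0⟩

lemma IsInjEnvelope.exists_retract {M Q J : Mdl R A} {η : M ⟶ Q} (hη : IsInjEnvelope R A η)
    (hM : FP R A M) (hJ : FPInjective R A J) {ι : M ⟶ J} (hι : MonoPt ι) :
    ∃ (s : Q ⟶ J) (r : J ⟶ Q), s ≫ r = 𝟙 Q := by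
  obtain ⟨s, hs⟩ := hJ.2 M Q hM hη.1.1 η hη.2.1 ι
  obtain ⟨r, hr⟩ := hη.1.2 Q J hη.1.1 hJ.1 s (hη.2.2 J hJ.1 s (hs ▸ hι)) (𝟙 Q)
  exact ⟨s, r, hr⟩

lemma IsInjEnvelope.fgProj_of_domdimGE {d : ℕ} (hdom : DomdimGE R A d) {b : A} {Q : Mdl R A}
    {η : Pr R A b ⟶ Q} (hη : IsInjEnvelope R A η) : FGProj R A Q := by
  obtain ⟨I', η', -, hη', -, -, hinj', hproj'⟩ := hdom b
  obtain ⟨s, r, hsr⟩ := hη.exists_retract (fp_pr b) (hinj' 0) hη'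
  exact (hproj' 0 d.zero_le).of_retract s r hsr

lemma InI0.fgProj_of_domdimGE [HasFiniteBiproducts A] {d : ℕ} (hdom : DomdimGE R A d)
    {J : Mdl R A} (hJ : InI0 R A J) : FGProj R A J := by
  obtain ⟨n, b, Jv, η, hη, s, r, hsr⟩ := hJ
  exact (fgProj_biproduct fun i => (hη i).fgProj_of_domdimGE hdom).of_retract s r hsr

lemma FP.exists_map_ne_zero_of_isEssentialMono [HasBinaryBiproducts A] {M N : Mdl R A}
    (hM : FP R A M) {F : M ⟶ N} (hess : IsEssentialMono R A (kernel.ι F)) {x : Aᵒᵖ}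
    {u : M.obj x} (hu : u ≠ 0) :
    ∃ (y : Aᵒᵖ) (φ : x ⟶ y), M.map φ u ≠ 0 ∧ F.app y (M.map φ u) = 0 := by
  -- Otherwise `ker F` meets the image of `ū : P_x → M` trivially, so `ker F → M / im ū` is mono,
  -- and by essentiality so is `M → M / im ū`; but it kills `u`.
  by_contra! H
  obtain ⟨ū, hū⟩ := hM.exists_pr_hom (c := x.unop) u
  have hmono : MonoPt (kernel.ι F ≫ quotRange.π ū) := by
    intro y
    rw [injective_iff_map_eq_zero]
    intro w hw
    obtain ⟨g, hg⟩ := (quotRange.π_app_eq_zero_iff ū _).1 hw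
    change ū.app y g = (kernel.ι F).app y w at hg
    have hF : F.app y ((kernel.ι F).app y w) = 0 := congr(($(kernel.condition F)).app y w)
    rw [← hg, pr_hom_app, hū] at hF
    apply hess.1 y
    rw [map_zero, ← hg, pr_hom_app, hū]
    by_contra hne
    exact H y g.op hne hF
  apply hu
  apply hess.2 _ (hM.quotRange ū) _ hmono (op x.unop)
  rw [map_zero, quotRange.π_app_eq_zero_iff]
  exact ⟨𝟙 _, hū⟩

lemma FP.exists_map_ne_zero_forall_app_eq_zero [HasBinaryBiproducts A] {J Y X : Mdl R A}
    (hY : FP R A Y) {F : Y ⟶ X} (hess : IsEssentialMono R A (kernel.ι F)) {ι : Type*}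
    (t : ι → (J ⟶ Y)) (S : Finset ι) {x : Aᵒᵖ} {v : J.obj x} (hv : v ≠ 0) :
    ∃ (y : Aᵒᵖ) (φ : x ⟶ y), J.map φ v ≠ 0 ∧ ∀ j ∈ S, F.app y ((t j).app y (J.map φ v)) = 0 := by
  classical
  induction S using Finset.induction_on with
  | empty => exact ⟨x, 𝟙 x, by simpa using hv, by simp⟩
  | insert j S _ ih =>
    obtain ⟨y, φ, hne, hS⟩ := ih
    simp only [Finset.forall_mem_insert]
    by_cases h : (t j).app y (J.map φ v) = 0
    · exact ⟨y, φ, hne, by rw [h, map_zero], hS⟩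
    obtain ⟨z, χ, hne', hker⟩ := hY.exists_map_ne_zero_of_isEssentialMono hess h
    have hnat : ∀ k, (t k).app z (J.map (φ ≫ χ) v) = Y.map χ ((t k).app y (J.map φ v)) := by
      intro k
      rw [J.map_comp, ConcreteCategory.comp_apply, NatTrans.naturality_apply]
    refine ⟨z, φ ≫ χ, fun h0 => hne' ?_, by rw [hnat]; exact hker, fun k hk => ?_⟩
    · rw [← hnat, h0, map_zero]
    · rw [hnat, NatTrans.naturality_apply F χ, hS k hk, map_zero]

lemma biproduct_app_eq_zero {n : ℕ} {Q : Fin n → Mdl R A} {y : Aᵒᵖ} {v : (⨁ Q).obj y}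
    (h : ∀ j, (biproduct.π Q j).app y v = 0) : v = 0 := by
  have : (𝟙 (⨁ Q) : ⨁ Q ⟶ ⨁ Q).app y v =
      ∑ j, (biproduct.ι Q j).app y ((biproduct.π Q j).app y v) := by
    rw [← biproduct.total, NatTrans.app_sum]
    simp
  simpa [h] using this

lemma isZero_of_fgProj_of_inAddOf [HasBinaryBiproducts A] {J X Y : Mdl R A} (hY : FP R A Y)
    {F : Y ⟶ X} (hF : EpiPt F) (hess : IsEssentialMono R A (kernel.ι F)) (hJ : FGProj R A J)
    (hadd : InAddOf R A X J) : IsZero J := by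
  obtain ⟨n, s, r, hsr⟩ := hadd
  choose t ht using fun j => hJ.exists_lift hY hF (s ≫ biproduct.π _ j)
  refine Functor.isZero _ fun x => ?_
  have : Subsingleton (J.obj x) := by
    refine subsingleton_of_forall_eq 0 fun v => ?_
    by_contra hv
    obtain ⟨y, φ, hne, hker⟩ := hY.exists_map_ne_zero_forall_app_eq_zero hess t Finset.univ hv
    have hs : s.app y (J.map φ v) = 0 := biproduct_app_eq_zero fun j => by
      rw [← hker j (Finset.mem_univ j)]
      exact congr(($(ht j)).app y (J.map φ v)).symm
    apply hne
    calc J.map φ v = r.app y (s.app y (J.map φ v)) := congr(($hsr).app y (J.map φ v)).symm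
      _ = 0 := by rw [hs, map_zero]
  exact ModuleCat.isZero_of_subsingleton _

end

/-- for a `d`-Auslander dualizing `R`-variety and a minimal injective
coresolution `0 → P_a → I^0 → ⋯ → I^{d+1} → 0`, the terms `I^0, …, I^d` lie in `I^0(A)`
and `I^0(A) ∩ add I^{d+1} = 0`. -/
theorem stmt18 (E : ModuleCat.{u} R) (hdual : IsDualizingVariety R A E)
    (d : ℕ) (hd : 1 ≤ d) (haus : IsDAuslander R A d)
    (a : A) (I : ℕ → Mdl R A) (η : Pr R A a ⟶ I 0) (f : ∀ i, I i ⟶ I (i + 1))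
    (hmin : MinInjCores R A (Pr R A a) I η f)
    (hlen : ∀ i, d + 1 < i → IsZero (I i)) :
    (∀ k ≤ d, InI0 R A (I k)) ∧
    ∀ J : Mdl R A, InI0 R A J → InAddOf R A (I (d + 1)) J → IsZero J := by
  have := hdual.hasBiproducts
  have := hasBinaryBiproducts_of_finite_biproducts A
  have := hdual.idemSplit
  have hI := hmin.isInjCoresolution
  refine ⟨fun k hk => ?_, fun J hJ hadd => ?_⟩
  · exact inI0_of_fgProj (hmin.fgProj_of_domdimGE hdual.homFinite haus.2 hk) (hI.injective k)
  · obtain ⟨d, rfl⟩ := Nat.exists_eq_add_of_le' hd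
    have hepi : EpiPt (f (d + 1)) := (hI.exact (d + 1)).epiPt_of_isZero (hlen _ (by omega))
    have hess : IsEssentialMono R A (kernel.ι (f (d + 1))) := hmin.2.2.2.2.2 d
    exact isZero_of_fgProj_of_inAddOf (hI.injective _).1 hepi hess
      (hJ.fgProj_of_domdimGE haus.2) hadd

end DP
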